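/- Let m, n be positive integers, λ = (8n+8)/(8n+7), ℓ_m = (9/2)m²n + (3/2)mn + 3m + 1, v_m = (1/4)nm(3m+1)(6nm+n+3), σ_m = 3v_m - (2/λ)mnℓ_m. If β is a positive integer with β·σ_m ≤ 3mnℓ_m, then β ≤ 2. -/
import Mathlib

theorem stmt_5 (m n : ℕ) (hm : 0 < m) (hn : 0 < n) (lam ℓ v σ : ℚ)
    (hlam : lam = (8 * n + 8) / (8 * n + 7))
    (hℓ : ℓ = (9/2) * m^2 * n + (3/2) * m * n + 3 * m + 1)
    (hv : v = (1/4) * n * m * (3 * m + 1) * (6 * n * m + n + 3))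
    (hσ : σ = 3 * v - (2 / lam) * m * n * ℓ)
    (β : ℕ) (hβ : 0 < β) (h : (β : ℚ) * σ ≤ 3 * m * n * ℓ) :
    β ≤ 2 := by
  have hM : (1:ℚ) ≤ (m:ℚ) := by exact_mod_cast hm
  have hN : (1:ℚ) ≤ (n:ℚ) := by exact_mod_cast hn
  have hden : (8 * (n:ℚ) + 7) ≠ 0 := by positivity
  have hden2 : (8 * (n:ℚ) + 8) ≠ 0 := by positivity
  have hlam' : 2 / lam = (8 * (n:ℚ) + 7) / (4 * n + 4) := by
    rw [hlam]; field_simp; ring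
  have h4 : (0:ℚ) < 4 * (n:ℚ) + 4 := by positivity
  have e : σ - (m:ℚ) * n * ℓ =
      ((4 * (n:ℚ) + 4) * (3 * v) - (12 * (n:ℚ) + 11) * ((m:ℚ) * n * ℓ)) / (4 * (n:ℚ) + 4) := by
    rw [hσ, hlam']
    field_simp
    ring
  have hkey2 : (12 * (n:ℚ) + 11) * ((m:ℚ) * n * ℓ) < (4 * (n:ℚ) + 4) * (3 * v) := by
    rw [hℓ, hv]
    nlinarith [mul_le_mul hM hN (by linarith) (by linarith),
      sq_nonneg ((m:ℚ) - 1), sq_nonneg ((n:ℚ) - 1),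
      mul_pos (mul_pos (by linarith : (0:ℚ) < (m:ℚ)) (by linarith : (0:ℚ) < (n:ℚ)))
        (by linarith : (0:ℚ) < (m:ℚ))]
  have hkey : (m:ℚ) * n * ℓ < σ := by
    have : 0 < σ - (m:ℚ) * n * ℓ := by
      rw [e]; exact div_pos (by linarith) h4
    linarith
  by_contra hb
  push_neg at hb
  have h3 : (3:ℚ) ≤ (β:ℚ) := by exact_mod_cast hb
  have hℓpos : 0 < ℓ := by rw [hℓ]; positivity
  have hmnl : 0 < (m:ℚ) * n * ℓ := by positivity
  have hσpos : 0 < σ := lt_trans hmnl hkey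
  nlinarith [mul_le_mul_of_nonneg_right h3 (le_of_lt hσpos)]
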